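/- (Irreducibility of the source-agnostic chain) Let Q be an irreducible stochastic matrix on a finite set X with |X| ≥ 2, and let 0 < r < 1 (r = f_m·p_s). Define a Markov chain on X × X with transitions: from (i,j) with i ≠ j, go to (k,i) with probability Q(i,k)·r and to (k,j) with probability Q(i,k)·(1−r); from (i,i), go to (k,i) with probability Q(i,k). Then this chain on X × X is irreducible. -/
import Mathlib


/-- The transition matrix of the (source state, receiver estimate) chain under a
source-agnostic policy with success probability `r`. -/
noncomputable def saKernel {X : Type*} [Fintype X] [DecidableEq X]
    (Q : Matrix X X ℝ) (r : ℝ) : Matrix (X × X) (X × X) ℝ :=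
  fun p q =>
    if p.1 = p.2 then (if q.2 = p.1 then Q p.1 q.1 else 0)
    else if q.2 = p.1 then Q p.1 q.1 * r
    else if q.2 = p.2 then Q p.1 q.1 * (1 - r)
    else 0

lemma matpow_nonneg {Y : Type*} [Fintype Y] [DecidableEq Y]
    {M : Matrix Y Y ℝ} (h : ∀ p q, 0 ≤ M p q) :
    ∀ n p q, 0 ≤ (M ^ n) p q := by
  intro n
  induction n with
  | zero =>
      intro p q
      simp [Matrix.one_apply]
      split_ifs <;> norm_num
  | succ n ih =>
      intro p q
      rw [pow_succ, Matrix.mul_apply]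
      exact Finset.sum_nonneg fun t _ => mul_nonneg (ih p t) (h t q)

lemma matpow_chain {Y : Type*} [Fintype Y] [DecidableEq Y]
    {M : Matrix Y Y ℝ} (h : ∀ p q, 0 ≤ M p q) {m n : ℕ} {a b c : Y}
    (h1 : 0 < (M ^ m) a b) (h2 : 0 < (M ^ n) b c) :
    0 < (M ^ (m + n)) a c := by
  rw [pow_add, Matrix.mul_apply]
  exact Finset.sum_pos'
    (fun t _ => mul_nonneg (matpow_nonneg h m a t) (matpow_nonneg h n t c))
    ⟨b, Finset.mem_univ b, mul_pos h1 h2⟩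

section Aux
variable {X : Type*} [Fintype X] [DecidableEq X]
  (Q : Matrix X X ℝ) (r : ℝ)

lemma saKernel_nonneg (hQnonneg : ∀ i j, 0 ≤ Q i j) (hr0 : 0 < r) (hr1 : r < 1) :
    ∀ p q, 0 ≤ saKernel Q r p q := by
  intro p q
  unfold saKernel
  have h1 : (0:ℝ) ≤ 1 - r := by linarith
  split_ifs <;>
    first
      | exact hQnonneg _ _
      | exact mul_nonneg (hQnonneg _ _) hr0.le
      | exact mul_nonneg (hQnonneg _ _) h1
      | exact le_refl 0

/-- A single step keeping the second coordinate fixed. -/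
lemma saKernel_keep (hr1 : r < 1) {m m' c : X} (h : 0 < Q m m') :
    0 < saKernel Q r (m, c) (m', c) := by
  rcases eq_or_ne m c with rfl | hmc
  · simpa [saKernel] using h
  · have h2 : saKernel Q r (m, c) (m', c) = Q m m' * (1 - r) := by
      unfold saKernel
      rw [if_neg hmc, if_neg (show ¬((m', c).2 = (m, c).1) from fun hh => hmc hh.symm),
        if_pos rfl]
    rw [h2]
    exact mul_pos h (by linarith)

/-- A successful transmission step from an off-diagonal state. -/
lemma saKernel_succ (hr0 : 0 < r) {m m' c : X} (hmc : m ≠ c) (h : 0 < Q m m') :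
    0 < saKernel Q r (m, c) (m', m) := by
  have h2 : saKernel Q r (m, c) (m', m) = Q m m' * r := by
    simp [saKernel, hmc]
  rw [h2]
  exact mul_pos h hr0

/-- Walking the first coordinate along a `Q`-path keeps the second coordinate. -/
lemma saKernel_walk (hQnonneg : ∀ i j, 0 ≤ Q i j) (hr0 : 0 < r) (hr1 : r < 1)
    (n : ℕ) : ∀ a b c : X, 0 < (Q ^ n) a b →
    0 < ((saKernel Q r) ^ n) (a, c) (b, c) := by
  induction n with
  | zero =>
      intro a b c h
      rcases eq_or_ne a b with rfl | hab
      · simp [Matrix.one_apply]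
      · rw [pow_zero, Matrix.one_apply_ne hab] at h
        exact absurd h (lt_irrefl 0)
  | succ n ih =>
      intro a b c h
      rw [pow_succ', Matrix.mul_apply] at h
      have : ∃ t, 0 < Q a t * (Q ^ n) t b := by
        by_contra hc
        push_neg at hc
        have : ∑ t, Q a t * (Q ^ n) t b ≤ 0 := Finset.sum_nonpos fun t _ => hc t
        linarith
      obtain ⟨t, ht⟩ := this
      have h1 : 0 < Q a t :=
        lt_of_le_of_ne (hQnonneg a t) (by
          intro hh
          rw [← hh] at ht
          simp at ht)
      have h2 : 0 < (Q ^ n) t b := by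
        by_contra hc
        have := matpow_nonneg hQnonneg n t b
        have h2' : (Q ^ n) t b = 0 := le_antisymm (not_lt.mp hc) this
        rw [h2'] at ht
        simp at ht
      have step := saKernel_keep Q r hr1 (c := c) h1
      have rest := ih t b c h2
      have := matpow_chain (saKernel_nonneg Q r hQnonneg hr0 hr1)
        (m := 1) (n := n) (a := (a, c)) (b := (t, c)) (c := (b, c))
        (by simpa using step) rest
      simpa [add_comm] using this

end Aux

/-- Irreducibility of the source-agnostic chain: if `Q` is an irreducible
stochastic matrix on `X` (with `|X| ≥ 2`) and `0 < r < 1`, then the product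
chain on `X × X` with kernel `saKernel Q r` is irreducible. -/
theorem saKernel_irreducible {X : Type*} [Fintype X] [DecidableEq X]
    (hX : 2 ≤ Fintype.card X)
    (Q : Matrix X X ℝ) (hQnonneg : ∀ i j, 0 ≤ Q i j)
    (hQrow : ∀ i, ∑ j, Q i j = 1)
    (hQirred : ∀ i j : X, ∃ n : ℕ, 1 ≤ n ∧ 0 < (Q ^ n) i j)
    (r : ℝ) (hr0 : 0 < r) (hr1 : r < 1) :
    ∀ s s' : X × X, ∃ n : ℕ, 1 ≤ n ∧ 0 < ((saKernel Q r) ^ n) s s' := by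
  have Knn := saKernel_nonneg Q r hQnonneg hr0 hr1
  rintro ⟨i, j⟩ ⟨k, l⟩
  by_cases hjl : j = l
  · subst hjl
    obtain ⟨n, hn1, hn⟩ := hQirred i k
    exact ⟨n, hn1, saKernel_walk Q r hQnonneg hr0 hr1 n i k j hn⟩
  · -- first walk to (l, j), then a successful step to (z, l), then walk to (k, l)
    obtain ⟨n1, hn11, hn1⟩ := hQirred i l
    have w1 : 0 < ((saKernel Q r) ^ n1) (i, j) (l, j) :=
      saKernel_walk Q r hQnonneg hr0 hr1 n1 i l j hn1
    -- pick z with Q l z > 0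
    have hz : ∃ z, 0 < Q l z := by
      by_contra hc
      push_neg at hc
      have : ∑ z, Q l z ≤ 0 := Finset.sum_nonpos fun z _ => hc z
      rw [hQrow l] at this
      linarith
    obtain ⟨z, hz⟩ := hz
    have step : 0 < ((saKernel Q r) ^ 1) (l, j) (z, l) := by
      simpa using saKernel_succ Q r hr0 (fun h => hjl h.symm) hz
    obtain ⟨n2, hn21, hn2⟩ := hQirred z k
    have w2 : 0 < ((saKernel Q r) ^ n2) (z, l) (k, l) :=
      saKernel_walk Q r hQnonneg hr0 hr1 n2 z k l hn2
    refine ⟨n1 + 1 + n2, by omega, ?_⟩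
    exact matpow_chain Knn (matpow_chain Knn w1 step) w2
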